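/- arXiv:1005.2427 — 2 statements merged into one kernel-verified Lean document; each statement's English description precedes it below -/
import Mathlib

section
/- For every N ≥ 3, the periodic-boundary spin-1 AKLT state |Ψ_N⟩ ∈ (ℂ³)^{⊗N} is a nonzero vector satisfying H_AKLT |Ψ_N⟩ = 0, where H_AKLT = Σ_{i=1}^{N} (P_2)_{i,i+1} (indices mod N) and (P_2)_{i,i+1} acts as P_2 = (1/3)·𝟙 + (1/2)·Θ + (1/6)·Θ² on the tensor factors i, i+1 and as identity elsewhere. Since H_AKLT is a sum of orthogonal projectors and hence positive semidefinite, |Ψ_N⟩ is a zero-energy ground state of H_AKLT. -/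
open Matrix Kronecker ComplexOrder

/-!
STATEMENT 13: For every `N ≥ 3`, the periodic-boundary spin-1 AKLT state is a nonzero
vector annihilated by the AKLT Hamiltonian `H = Σ_{i=1}^N (P_2)_{i,i+1}` (indices mod
`N`), which is positive semidefinite; hence it is a zero-energy ground state.
-/

/-- The spin-1 AKLT Kraus operators: index `0 ↦ M = +1`, `1 ↦ M = 0`, `2 ↦ M = −1`. -/
noncomputable def akltA : Fin 3 → Matrix (Fin 2) (Fin 2) ℂ
  | 0 => (Real.sqrt (2 / 3) : ℂ) • !![0, 1; 0, 0]
  | 1 => -((Real.sqrt 3 : ℂ))⁻¹ • !![1, 0; 0, -1]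
  | 2 => -(Real.sqrt (2 / 3) : ℂ) • !![0, 0; 1, 0]

/-- The spin-1 matrices on `ℂ³` (basis ordered by `S_z`-eigenvalue `+1, 0, −1`):
index `0 ↦ S_x`, `1 ↦ S_y`, `2 ↦ S_z`. -/
noncomputable def spin1 : Fin 3 → Matrix (Fin 3) (Fin 3) ℂ
  | 0 => ((Real.sqrt 2 : ℂ))⁻¹ • !![0, 1, 0; 1, 0, 1; 0, 1, 0]
  | 1 => ((Real.sqrt 2 : ℂ))⁻¹ •
      !![0, -Complex.I, 0; Complex.I, 0, -Complex.I; 0, Complex.I, 0]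
  | 2 => !![1, 0, 0; 0, 0, 0; 0, 0, -1]

/-- `Θ = S_x ⊗ S_x + S_y ⊗ S_y + S_z ⊗ S_z` on `ℂ³ ⊗ ℂ³`. -/
noncomputable def Theta : Matrix (Fin 3 × Fin 3) (Fin 3 × Fin 3) ℂ :=
  ∑ α : Fin 3, spin1 α ⊗ₖ spin1 α

/-- `P_2 = (1/3)·𝟙 + (1/2)·Θ + (1/6)·Θ²`, the projector onto the total-spin-2
subspace of two spin-1 particles. -/
noncomputable def P2 : Matrix (Fin 3 × Fin 3) (Fin 3 × Fin 3) ℂ :=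
  (1 / 3 : ℂ) • 1 + (1 / 2 : ℂ) • Theta + (1 / 6 : ℂ) • (Theta * Theta)

/-- The periodic-boundary translationally invariant MPS on `N` sites, built from
`D × D` Kraus operators `A^{[M]}`. -/
noncomputable def mpsPBC {d D : ℕ} (A : Fin d → Matrix (Fin D) (Fin D) ℂ) (N : ℕ) :
    (Fin N → Fin d) → ℂ :=
  fun M => Matrix.trace ((List.ofFn fun i => A (M i)).prod)

/-- The operator on `(ℂ^d)^{⊗N}` acting as the two-site operator `h` on tensor
factors `i` and `j` and as the identity on all other factors. -/
noncomputable def twoSiteOp {d : ℕ} (h : Matrix (Fin d × Fin d) (Fin d × Fin d) ℂ)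
    (N : ℕ) (i j : Fin N) : Matrix (Fin N → Fin d) (Fin N → Fin d) ℂ :=
  Matrix.of fun M M' =>
    h (M i, M j) (M' i, M' j) *
      ∏ k ∈ (Finset.univ.erase i).erase j, (if M k = M' k then 1 else 0)

/-!
The two-site AKLT tensor `∑_{a,b} A^{[a]} A^{[b]} |a b⟩` has no total-spin-2 component: row by
row, `P₂` annihilating it amounts to `A⁺A⁺ = A⁻A⁻ = 0`, `A⁺A⁰ + A⁰A⁺ = A⁰A⁻ + A⁻A⁰ = 0` and
`A⁺A⁻ + 2 A⁰A⁰ + A⁻A⁺ = 0`. By cyclicity of the trace every bond `(i, i + 1)` of the ring, the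
wrap-around one included, can be moved to the bond `(0, 1)`, so every term of `H` kills `Ψ_N`.
`P₂` is a Hermitian idempotent, hence positive semidefinite, and so is its embedding `P₂ ⊗ 𝟙`.
In the product basis `Θ` has integer entries, so the identities about `P₂` are identities
between `9 × 9` integer matrices, checked by computation. Finally, the configuration
`(+1, −1, 0, …, 0)` has amplitude `−(2/3)(−1/√3)^{N−2} ≠ 0`.
-/

theorem Matrix.trace_prod_rotate {n R : Type*} [Fintype n] [DecidableEq n] [CommSemiring R]
    (l : List (Matrix n n R)) (r : ℕ) : (l.rotate r).prod.trace = l.prod.trace := by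
  rw [List.rotate_eq_drop_append_take_mod, List.prod_append, trace_mul_comm, ← List.prod_append,
    List.take_append_drop]

theorem List.ofFn_comp_add_eq_rotate {α : Type*} {N : ℕ} [NeZero N] (f : Fin N → α)
    (r : Fin N) : List.ofFn (fun k => f (k + r)) = (List.ofFn f).rotate r := by
  refine List.ext_get (by simp) fun m _ _ => ?_
  simp only [List.get_ofFn, List.get_rotate]
  exact congrArg f (Fin.ext (by simp [Fin.add_def]))

theorem Fin.update_update_comp_add_eq_cons_cons {α : Type*} {n : ℕ} (M : Fin (n + 2) → α)
    (i : Fin (n + 2)) (a b : α) :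
    (fun k => Function.update (Function.update M i a) (i + 1) b (k + i)) =
      Fin.cons a (Fin.cons b fun k => M (k.succ.succ + i)) := by
  funext k
  refine Fin.cases ?_ (Fin.cases ?_ fun k => ?_) k
  · simp
  · simp [add_comm]
  · have h0 : k.succ.succ ≠ 0 := Fin.succ_ne_zero _
    have h1 : k.succ.succ ≠ 1 := fun h => Fin.succ_ne_zero k (Fin.succ_injective _ h)
    simp [add_comm i 1, h0, h1]

section TwoSiteOp

variable {N d : ℕ} {i j : Fin N}

def splitAtTwoSites (hij : i ≠ j) :
    (Fin N → Fin d) ≃ (Fin d × Fin d) × ((Finset.univ.erase i).erase j → Fin d) where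
  toFun M := ((M i, M j), fun k => M k)
  invFun p k :=
    if hi : k = i then p.1.1 else if hj : k = j then p.1.2 else p.2 ⟨k, by simp [hi, hj]⟩
  left_inv M := by
    funext k
    by_cases hi : k = i
    · simp [hi]
    · by_cases hj : k = j <;> simp [hi, hj, hij.symm]
  right_inv := by
    rintro ⟨⟨a, b⟩, f⟩
    have hk : ∀ k : (Finset.univ.erase i).erase j, (k : Fin N) ≠ i ∧ (k : Fin N) ≠ j :=
      fun k => by
        simpa only [Finset.mem_erase, Finset.mem_univ, and_true, true_and, and_comm] using k.2
    simp [hij.symm, hk]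

theorem splitAtTwoSites_apply (hij : i ≠ j) (M : Fin N → Fin d) :
    splitAtTwoSites hij M = ((M i, M j), fun k : (Finset.univ.erase i).erase j => M k) := rfl

theorem splitAtTwoSites_symm_apply (hij : i ≠ j) (a b : Fin d) (M : Fin N → Fin d) :
    (splitAtTwoSites hij).symm ((a, b), fun k : (Finset.univ.erase i).erase j => M k) =
      Function.update (Function.update M i a) j b := by
  funext k
  by_cases hi : k = i
  · simp [splitAtTwoSites, hi, hij]
  · by_cases hj : k = j <;> simp [splitAtTwoSites, hi, hj, hij.symm]

theorem twoSiteOp_eq_submatrix (h : Matrix (Fin d × Fin d) (Fin d × Fin d) ℂ) (hij : i ≠ j) :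
    twoSiteOp h N i j = (h ⊗ₖ 1).submatrix (splitAtTwoSites hij) (splitAtTwoSites hij) := by
  ext M M'
  simp [twoSiteOp, splitAtTwoSites, one_apply, Finset.prod_boole, funext_iff]

theorem twoSiteOp_posSemidef {h : Matrix (Fin d × Fin d) (Fin d × Fin d) ℂ}
    (hh : h.PosSemidef) (hij : i ≠ j) : (twoSiteOp h N i j).PosSemidef := by
  rw [twoSiteOp_eq_submatrix h hij]
  exact (hh.kronecker PosSemidef.one).submatrix _

theorem twoSiteOp_mulVec_apply (h : Matrix (Fin d × Fin d) (Fin d × Fin d) ℂ) (hij : i ≠ j)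
    (ψ : (Fin N → Fin d) → ℂ) (M : Fin N → Fin d) :
    (twoSiteOp h N i j *ᵥ ψ) M =
      ∑ a, ∑ b, h (M i, M j) (a, b) * ψ (Function.update (Function.update M i a) j b) := by
  rw [twoSiteOp_eq_submatrix h hij, submatrix_mulVec_equiv]
  simp [mulVec, dotProduct, Fintype.sum_prod_type, one_apply, splitAtTwoSites_apply,
    splitAtTwoSites_symm_apply]

end TwoSiteOp

section MPS

variable {d D : ℕ} (A : Fin d → Matrix (Fin D) (Fin D) ℂ)

theorem mpsPBC_comp_add {N : ℕ} [NeZero N] (M : Fin N → Fin d) (r : Fin N) :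
    mpsPBC A N (fun k => M (k + r)) = mpsPBC A N M := by
  rw [mpsPBC, List.ofFn_comp_add_eq_rotate (fun k => A (M k)), trace_prod_rotate]; rfl

theorem mpsPBC_cons_cons {n : ℕ} (a b : Fin d) (M : Fin n → Fin d) :
    mpsPBC A (n + 2) (Fin.cons a (Fin.cons b M)) =
      trace (A a * A b * (List.ofFn fun k => A (M k)).prod) := by
  simp [mpsPBC, List.ofFn_succ, mul_assoc]

theorem mpsPBC_update_update {n : ℕ} (M : Fin (n + 2) → Fin d) (i : Fin (n + 2)) (a b : Fin d) :
    mpsPBC A (n + 2) (Function.update (Function.update M i a) (i + 1) b) =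
      trace (A a * A b * (List.ofFn fun k : Fin n => A (M (k.succ.succ + i))).prod) := by
  rw [← mpsPBC_comp_add A _ i, Fin.update_update_comp_add_eq_cons_cons, mpsPBC_cons_cons]

theorem twoSiteOp_mulVec_mpsPBC_eq_zero {n : ℕ} {h : Matrix (Fin d × Fin d) (Fin d × Fin d) ℂ}
    (hA : ∀ c e, ∑ a, ∑ b, h (c, e) (a, b) • (A a * A b) = 0) (i : Fin (n + 2)) :
    twoSiteOp h (n + 2) i (i + 1) *ᵥ mpsPBC A (n + 2) = 0 := by
  funext M
  rw [twoSiteOp_mulVec_apply h (by simp) _ M]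
  simp_rw [mpsPBC_update_update]
  set R := (List.ofFn fun k : Fin n => A (M (k.succ.succ + i))).prod
  calc _ = trace ((∑ a, ∑ b, h (M i, M (i + 1)) (a, b) • (A a * A b)) * R) := by
        simp only [Finset.sum_mul, trace_sum, smul_mul_assoc, trace_smul, smul_eq_mul]
    _ = 0 := by rw [hA, zero_mul, trace_zero]

end MPS

def ofIntFin9 : Matrix (Fin 9) (Fin 9) ℤ →+* Matrix (Fin 3 × Fin 3) (Fin 3 × Fin 3) ℂ :=
  (reindexAlgEquiv ℂ ℂ finProdFinEquiv.symm).toRingHom.comp (Int.castRingHom ℂ).mapMatrix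

@[simp]
theorem ofIntFin9_apply (m : Matrix (Fin 9) (Fin 9) ℤ) (p q : Fin 3 × Fin 3) :
    ofIntFin9 m p q = m (finProdFinEquiv p) (finProdFinEquiv q) := rfl

theorem ofIntFin9_conjTranspose (m : Matrix (Fin 9) (Fin 9) ℤ) :
    (ofIntFin9 m)ᴴ = ofIntFin9 mᵀ := by
  ext p q
  simp

-- Row and column `3 * a + b` of a `9 × 9` table stands for the pair `(a, b)`.
def thetaInt : Matrix (Fin 9) (Fin 9) ℤ :=
  !![1, 0, 0, 0, 0, 0, 0, 0, 0;
     0, 0, 0, 1, 0, 0, 0, 0, 0;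
     0, 0, -1, 0, 1, 0, 0, 0, 0;
     0, 1, 0, 0, 0, 0, 0, 0, 0;
     0, 0, 1, 0, 0, 0, 1, 0, 0;
     0, 0, 0, 0, 0, 0, 0, 1, 0;
     0, 0, 0, 0, 1, 0, -1, 0, 0;
     0, 0, 0, 0, 0, 1, 0, 0, 0;
     0, 0, 0, 0, 0, 0, 0, 0, 1]

def sixP2Int : Matrix (Fin 9) (Fin 9) ℤ :=
  !![6, 0, 0, 0, 0, 0, 0, 0, 0;
     0, 3, 0, 3, 0, 0, 0, 0, 0;
     0, 0, 1, 0, 2, 0, 1, 0, 0;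
     0, 3, 0, 3, 0, 0, 0, 0, 0;
     0, 0, 2, 0, 4, 0, 2, 0, 0;
     0, 0, 0, 0, 0, 3, 0, 3, 0;
     0, 0, 1, 0, 2, 0, 1, 0, 0;
     0, 0, 0, 0, 0, 3, 0, 3, 0;
     0, 0, 0, 0, 0, 0, 0, 0, 6]

theorem sixP2Int_eq : sixP2Int = 2 • 1 + 3 • thetaInt + thetaInt * thetaInt := by decide

theorem sixP2Int_transpose : sixP2Intᵀ = sixP2Int := by decide

theorem sixP2Int_mul_self : sixP2Int * sixP2Int = 6 • sixP2Int := by decide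

theorem Theta_eq_ofIntFin9 : Theta = ofIntFin9 thetaInt := by
  have h2 : (Real.sqrt 2 : ℂ) ^ 2 = 2 := by
    rw [← Complex.ofReal_pow, Real.sq_sqrt zero_le_two]; norm_num
  ext ⟨a, b⟩ ⟨c, e⟩
  fin_cases a <;> fin_cases b <;> fin_cases c <;> fin_cases e <;>
    simp [Theta, Fin.sum_univ_three, spin1, thetaInt, finProdFinEquiv] <;> ring_nf <;>
    norm_num [h2]

theorem P2_eq_ofIntFin9 : P2 = (6 : ℂ)⁻¹ • ofIntFin9 sixP2Int := by
  rw [P2, Theta_eq_ofIntFin9, sixP2Int_eq, map_add, map_add, map_nsmul, map_nsmul, map_mul,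
    map_one]
  module

theorem P2_posSemidef : P2.PosSemidef := by
  have hP2 : P2ᴴ * P2 = P2 := by
    rw [P2_eq_ofIntFin9, conjTranspose_smul, ofIntFin9_conjTranspose, sixP2Int_transpose,
      star_inv₀, star_ofNat, smul_mul_smul, ← map_mul, sixP2Int_mul_self, map_nsmul]
    module
  simpa only [hP2] using posSemidef_conjTranspose_mul_self P2

theorem akltA_zero_mul_self : akltA 0 * akltA 0 = 0 := by
  ext i j; fin_cases i <;> fin_cases j <;> simp [akltA, mul_apply]

theorem akltA_two_mul_self : akltA 2 * akltA 2 = 0 := by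
  ext i j; fin_cases i <;> fin_cases j <;> simp [akltA, mul_apply]

theorem akltA_anticomm_zero_one : akltA 0 * akltA 1 + akltA 1 * akltA 0 = 0 := by
  ext i j; fin_cases i <;> fin_cases j <;> simp [akltA]; ring

theorem akltA_anticomm_one_two : akltA 1 * akltA 2 + akltA 2 * akltA 1 = 0 := by
  ext i j; fin_cases i <;> fin_cases j <;> simp [akltA]; ring

theorem akltA_zero_mul_two : akltA 0 * akltA 2 = -(2 / 3 : ℂ) • !![1, 0; 0, 0] := by
  ext i j; fin_cases i <;> fin_cases j <;> simp [akltA, mul_apply]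
  rw [div_mul_div_comm, ← Complex.ofReal_mul, ← Complex.ofReal_mul, Real.mul_self_sqrt,
    Real.mul_self_sqrt] <;> norm_num

theorem akltA_two_mul_zero : akltA 2 * akltA 0 = -(2 / 3 : ℂ) • !![0, 0; 0, 1] := by
  ext i j; fin_cases i <;> fin_cases j <;> simp [akltA, mul_apply]
  rw [div_mul_div_comm, ← Complex.ofReal_mul, ← Complex.ofReal_mul, Real.mul_self_sqrt,
    Real.mul_self_sqrt] <;> norm_num

theorem akltA_one_eq_diagonal :
    akltA 1 = diagonal ![-(Real.sqrt 3 : ℂ)⁻¹, (Real.sqrt 3 : ℂ)⁻¹] := by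
  ext i j; fin_cases i <;> fin_cases j <;> simp [akltA]

theorem akltA_one_mul_self : akltA 1 * akltA 1 = (1 / 3 : ℂ) • 1 := by
  have h : (Real.sqrt 3 : ℂ)⁻¹ * (Real.sqrt 3 : ℂ)⁻¹ = 1 / 3 := by
    rw [← mul_inv, ← Complex.ofReal_mul, Real.mul_self_sqrt (by norm_num)]; norm_num
  rw [akltA_one_eq_diagonal, diagonal_mul_diagonal]
  ext i j; fin_cases i <;> fin_cases j <;> simp [h]

theorem akltA_zero_mul_two_add_two_mul_zero :
    akltA 0 * akltA 2 + akltA 2 * akltA 0 = -(2 : ℂ) • (akltA 1 * akltA 1) := by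
  rw [akltA_zero_mul_two, akltA_one_mul_self, akltA_two_mul_zero]
  ext i j; fin_cases i <;> fin_cases j <;> norm_num

theorem P2_sum_smul_akltA_mul_akltA (c e : Fin 3) :
    ∑ a, ∑ b, P2 (c, e) (a, b) • (akltA a * akltA b) = 0 := by
  rw [P2_eq_ofIntFin9]
  fin_cases c <;> fin_cases e <;> simp [Fin.sum_univ_three, sixP2Int, finProdFinEquiv]
  · exact akltA_zero_mul_self
  · linear_combination (norm := module) (6⁻¹ * 3 : ℂ) • akltA_anticomm_zero_one
  · linear_combination (norm := module) (6⁻¹ : ℂ) • akltA_zero_mul_two_add_two_mul_zero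
  · linear_combination (norm := module) (6⁻¹ * 3 : ℂ) • akltA_anticomm_zero_one
  · linear_combination (norm := module) (6⁻¹ * 2 : ℂ) • akltA_zero_mul_two_add_two_mul_zero
  · linear_combination (norm := module) (6⁻¹ * 3 : ℂ) • akltA_anticomm_one_two
  · linear_combination (norm := module) (6⁻¹ : ℂ) • akltA_zero_mul_two_add_two_mul_zero
  · linear_combination (norm := module) (6⁻¹ * 3 : ℂ) • akltA_anticomm_one_two
  · exact akltA_two_mul_self

theorem mpsPBC_akltA_ne_zero (n : ℕ) : mpsPBC akltA (n + 2) ≠ 0 := by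
  have hamp : mpsPBC akltA (n + 2) (Fin.cons 0 (Fin.cons 2 fun _ => 1)) =
      -(2 / 3 : ℂ) * (-(Real.sqrt 3 : ℂ)⁻¹) ^ n := by
    rw [mpsPBC_cons_cons, akltA_zero_mul_two, List.ofFn_const, List.prod_replicate,
      akltA_one_eq_diagonal, diagonal_pow]
    simp [trace_fin_two, vecMul_diagonal]
  intro h
  have h0 := congrFun h (Fin.cons 0 (Fin.cons 2 fun _ => 1))
  rw [hamp] at h0
  simp at h0

theorem aklt_state_is_ground_state :
    ∀ N, ∀ hN : 3 ≤ N,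
      mpsPBC akltA N ≠ 0 ∧
      (∑ i : Fin N,
        twoSiteOp P2 N i ⟨((i : ℕ) + 1) % N, Nat.mod_lt _ (by omega)⟩).mulVec
          (mpsPBC akltA N) = 0 ∧
      ∀ φ : (Fin N → Fin 3) → ℂ,
        0 ≤ star φ ⬝ᵥ (∑ i : Fin N,
          twoSiteOp P2 N i ⟨((i : ℕ) + 1) % N, Nat.mod_lt _ (by omega)⟩).mulVec φ := by
  intro N hN
  obtain ⟨n, rfl⟩ : ∃ n, N = n + 2 := ⟨N - 2, by omega⟩
  have hnext (i : Fin (n + 2)) :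
      (⟨((i : ℕ) + 1) % (n + 2), Nat.mod_lt _ (by omega)⟩ : Fin (n + 2)) = i + 1 :=
    Fin.ext (by simp [Fin.val_add])
  simp only [hnext]
  refine ⟨mpsPBC_akltA_ne_zero n, ?_, fun φ => ?_⟩
  · rw [sum_mulVec]
    exact Finset.sum_eq_zero fun i _ =>
      twoSiteOp_mulVec_mpsPBC_eq_zero akltA P2_sum_smul_akltA_mul_akltA i
  · exact (posSemidef_sum _ fun i _ =>
      twoSiteOp_posSemidef P2_posSemidef (by simp)).dotProduct_mulVec_nonneg φ
end

section
/- For every N ≥ 1 and every α ∈ {x, y, z}, the periodic-boundary spin-1 AKLT state |Ψ_N⟩ ∈ (ℂ³)^{⊗N} satisfies (Σ_{i=1}^N S_α^{(i)}) |Ψ_N⟩ = 0, where S_α^{(i)} acts as the spin-1 matrix S_α on the i-th tensor factor and as identity elsewhere; that is, the AKLT state is a global SU(2) singlet. -/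
open Matrix

/-- The operator `B^{(i)}` on `(ℂ^d)^{⊗N}`, acting as `B` on the `i`-th tensor factor
and as the identity on every other factor. -/
noncomputable def siteOp {d : ℕ} (B : Matrix (Fin d) (Fin d) ℂ) (N : ℕ) (i : Fin N) :
    Matrix (Fin N → Fin d) (Fin N → Fin d) ℂ :=
  Matrix.of fun M M' =>
    ∏ j, if j = i then B (M j) (M' j) else (if M j = M' j then 1 else 0)

theorem sum_prod_ofFn_update_lie {R : Type*} [Ring R] (J : R) :
    ∀ {n : ℕ} (f : Fin n → R),
      ∑ i, (List.ofFn (Function.update f i ⁅J, f i⁆)).prod = ⁅J, (List.ofFn f).prod⁆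
  | 0, _ => by simp [Ring.lie_def]
  | n + 1, f => by
    obtain ⟨a, g, rfl⟩ : ∃ a g, f = Fin.cons a g :=
      ⟨f 0, Fin.tail f, (Fin.cons_self_tail f).symm⟩
    simp only [Fin.sum_univ_succ, Fin.cons_zero, Fin.cons_succ, Fin.update_cons_zero,
      ← Fin.cons_update, List.ofFn_cons, List.prod_cons, ← Finset.mul_sum]
    rw [sum_prod_ofFn_update_lie J g]
    simp only [Ring.lie_def]
    noncomm_ring

section

variable {d D N : ℕ}

theorem siteOp_apply_update (B : Matrix (Fin d) (Fin d) ℂ) (i : Fin N)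
    (M : Fin N → Fin d) (m : Fin d) :
    siteOp B N i M (Function.update M i m) = B (M i) m := by
  rw [siteOp, of_apply, Finset.prod_eq_single i]
  · simp
  · intro j _ hj
    simp [hj]
  · simp

theorem siteOp_apply_eq_zero (B : Matrix (Fin d) (Fin d) ℂ) (i : Fin N)
    {M M' : Fin N → Fin d} (h : ∃ j ≠ i, M j ≠ M' j) :
    siteOp B N i M M' = 0 := by
  obtain ⟨j, hji, hj⟩ := h
  exact Finset.prod_eq_zero (Finset.mem_univ j) (by simp [hji, hj])

theorem siteOp_mulVec_apply (B : Matrix (Fin d) (Fin d) ℂ) (i : Fin N)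
    (ψ : (Fin N → Fin d) → ℂ) (M : Fin N → Fin d) :
    (siteOp B N i *ᵥ ψ) M = ∑ m, B (M i) m * ψ (Function.update M i m) := by
  refine (Fintype.sum_of_injective _ (Function.update_injective M i) _ _ ?_ ?_).symm
  · intro M' hM'
    dsimp only
    suffices ∃ j ≠ i, M j ≠ M' j by rw [siteOp_apply_eq_zero B i this, zero_mul]
    by_contra! h
    exact hM' ⟨M' i, funext fun j => by
      rcases eq_or_ne j i with rfl | hj
      · simp
      · simp [hj, h j hj]⟩
  · intro m
    dsimp only
    rw [siteOp_apply_update]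

theorem siteOp_mulVec_mpsPBC_apply (A : Fin d → Matrix (Fin D) (Fin D) ℂ)
    (B : Matrix (Fin d) (Fin d) ℂ) (i : Fin N) (M : Fin N → Fin d) :
    (siteOp B N i *ᵥ mpsPBC A N) M =
      trace (List.ofFn (Function.update (fun j => A (M j)) i (∑ m, B (M i) m • A m))).prod := by
  let L := traceLinearMap (Fin D) ℂ ℂ ∘ₗ
    (MultilinearMap.mkPiAlgebraFin ℂ N _).toLinearMap (fun j => A (M j)) i
  have hL (X) : L X = trace (List.ofFn (Function.update (fun j => A (M j)) i X)).prod := rfl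
  have hψ (m) : mpsPBC A N (Function.update M i m) = L (A m) :=
    congrArg (fun f => trace (List.ofFn f).prod) (Function.comp_update A M i m)
  rw [siteOp_mulVec_apply, ← hL, map_sum]
  simp only [hψ, map_smul, smul_eq_mul]

theorem sum_siteOp_mulVec_mpsPBC_eq_zero (A : Fin d → Matrix (Fin D) (Fin D) ℂ)
    (B : Matrix (Fin d) (Fin d) ℂ) (J : Matrix (Fin D) (Fin D) ℂ)
    (hA : ∀ m, ∑ m', B m m' • A m' = ⁅J, A m⁆) :
    (∑ i, siteOp B N i) *ᵥ mpsPBC A N = 0 := by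
  funext M
  simp only [sum_mulVec, Finset.sum_apply, siteOp_mulVec_mpsPBC_apply, hA, Pi.zero_apply]
  rw [← trace_sum, sum_prod_ofFn_update_lie, Ring.lie_def, trace_sub, trace_mul_comm, sub_self]

end

noncomputable def akltJ : Fin 3 → Matrix (Fin 2) (Fin 2) ℂ
  | 0 => (1/2 : ℂ) • !![0, 1; 1, 0]
  | 1 => (1/2 : ℂ) • !![0, Complex.I; -Complex.I, 0]
  | 2 => (1/2 : ℂ) • !![1, 0; 0, -1]

theorem sum_spin1_smul_akltA (α m : Fin 3) :
    ∑ m', spin1 α m m' • akltA m' = ⁅akltJ α, akltA m⁆ := by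
  have hsqrt2 : (Real.sqrt 2 : ℂ) ^ 2 = 2 := by norm_cast; simp
  fin_cases α <;> fin_cases m <;> ext i j <;> fin_cases i <;> fin_cases j <;>
    simp [spin1, akltA, akltJ, Ring.lie_def, Fin.sum_univ_three] <;> grind

theorem aklt_state_is_singlet :
    ∀ N, 1 ≤ N → ∀ α : Fin 3,
      (∑ i : Fin N, siteOp (spin1 α) N i).mulVec (mpsPBC akltA N) = 0 :=
  fun _ _ α =>
    sum_siteOp_mulVec_mpsPBC_eq_zero akltA (spin1 α) (akltJ α) (sum_spin1_smul_akltA α)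
end
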